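/- arXiv:0709.3278 — 2 statements merged into one kernel-verified Lean document; each statement's English description precedes it below -/
import Mathlib

section
/- The Morse spectrum of a chain component does not depend on the choice of metric: if d′ is another metric on E inducing the same topology as d, then for every chain component M of φ the Morse spectrum of M computed with (ε,T)-chains with respect to d′ equals the Morse spectrum of M computed with (ε,T)-chains with respect to d. -/
open Filter Topology

section

variable {E : Type*} [MetricSpace E] [CompactSpace E]
variable {V : Type*} [NormedAddCommGroup V] [NormedSpace ℝ V] [FiniteDimensional ℝ V]

/-- `a` is a continuous `V`-valued cocycle over the flow `φ`. -/
def IsAddCocycle (φ : Flow ℝ E) (a : ℝ → E → V) : Prop :=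
  Continuous (fun p : ℝ × E => a p.1 p.2) ∧
    ∀ t s x, a (t + s) x = a t (φ s x) + a s x

/-- `(N, x, t)` is an `(ε, T)`-chain of the flow `φ` from `p` to `q`, with
respect to the distance function `d`. -/
def IsFlowChainD (φ : Flow ℝ E) (d : E → E → ℝ) (ε T : ℝ) (N : ℕ) (x : ℕ → E)
    (t : ℕ → ℝ) (p q : E) : Prop :=
  0 < N ∧ x 0 = p ∧ x N = q ∧ (∀ i < N, T ≤ t i) ∧
    ∀ i < N, d (φ (t i) (x i)) (x (i + 1)) < ε

/-- The finite-time Morse exponent of a chain. -/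
noncomputable def chainExp (a : ℝ → E → V) (N : ℕ) (x : ℕ → E) (t : ℕ → ℝ) : V :=
  (∑ i ∈ Finset.range N, t i)⁻¹ • ∑ i ∈ Finset.range N, a (t i) (x i)

/-- The Morse spectrum of `M ⊆ E` computed with `(ε,T)`-chains with respect to
the distance function `d`. -/
noncomputable def morseSpecD (φ : Flow ℝ E) (a : ℝ → E → V) (d : E → E → ℝ)
    (M : Set E) : Set V :=
  ⋂ (ε : ℝ) (_ : 0 < ε) (T : ℝ) (_ : 0 < T), closure
    {v | ∃ N x t, ∃ p ∈ M, ∃ q ∈ M, IsFlowChainD φ d ε T N x t p q ∧ v = chainExp a N x t}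

/-- `M` is chain transitive (with respect to the ambient metric). -/
def IsChainTransitiveSet (φ : Flow ℝ E) (M : Set E) : Prop :=
  ∀ p ∈ M, ∀ q ∈ M, ∀ ε > (0:ℝ), ∀ T > (0:ℝ),
    ∃ N x t, IsFlowChainD φ dist ε T N x t p q

/-- A chain component is a maximal chain transitive subset. -/
def IsChainComponent (φ : Flow ℝ E) (M : Set E) : Prop :=
  IsChainTransitiveSet φ M ∧
    ∀ M' : Set E, IsChainTransitiveSet φ M' → M ⊆ M' → M = M'

/-- On a compact metric space, two distance functions compatible with the
topology are uniformly comparable. -/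
lemma unif_compare {E : Type*} [MetricSpace E] [CompactSpace E]
    (d₁ d₂ : E → E → ℝ)
    (hsymm₁ : ∀ x y, d₁ x y = d₁ y x)
    (heq₁ : ∀ x y, d₁ x y = 0 ↔ x = y)
    (htri₁ : ∀ x y z, d₁ x z ≤ d₁ x y + d₁ y z)
    (hnb₁ : ∀ (x : E) (η : ℝ), 0 < η → {y | d₁ x y < η} ∈ 𝓝 x)
    (hsymm₂ : ∀ x y, d₂ x y = d₂ y x)
    (htri₂ : ∀ x y z, d₂ x z ≤ d₂ x y + d₂ y z)
    (hnb₂ : ∀ (x : E) (η : ℝ), 0 < η → {y | d₂ x y < η} ∈ 𝓝 x) :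
    ∀ ε > (0:ℝ), ∃ δ > (0:ℝ), ∀ x y, d₁ x y < δ → d₂ x y < ε := by
  have hnonneg₁ : ∀ x y, 0 ≤ d₁ x y := by
    intro x y
    have h := htri₁ x y x
    rw [(heq₁ x x).2 rfl, hsymm₁ y x] at h
    linarith
  by_contra hcon
  push_neg at hcon
  obtain ⟨ε, hε, h⟩ := hcon
  have hchoice : ∀ n : ℕ, ∃ x y : E, d₁ x y < 1 / (n + 1) ∧ ε ≤ d₂ x y := by
    intro n
    obtain ⟨x, y, hxy, hxy2⟩ := h (1 / (n + 1)) (by positivity)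
    exact ⟨x, y, hxy, hxy2⟩
  choose u v hu hv using hchoice
  obtain ⟨z, -, k, hk, hkz⟩ := isCompact_univ.tendsto_subseq (fun n => Set.mem_univ (u n))
  obtain ⟨w, -, l, hl, hlw⟩ :=
    isCompact_univ.tendsto_subseq (fun n => Set.mem_univ (v (k n)))
  have huz : Tendsto (fun n => u (k (l n))) atTop (𝓝 z) := hkz.comp hl.tendsto_atTop
  have hvw : Tendsto (fun n => v (k (l n))) atTop (𝓝 w) := hlw
  have hsmall : Tendsto (fun n : ℕ => (1 : ℝ) / (k (l n) + 1)) atTop (𝓝 0) :=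
    tendsto_one_div_add_atTop_nhds_zero_nat.comp (hk.comp hl).tendsto_atTop
  have hzw : z = w := by
    have hd : ∀ η > (0:ℝ), d₁ z w < η := by
      intro η hη
      have e1 : ∀ᶠ n in atTop, d₁ z (u (k (l n))) < η / 3 :=
        huz.eventually_mem (hnb₁ z (η / 3) (by linarith))
      have e2 : ∀ᶠ n in atTop, d₁ w (v (k (l n))) < η / 3 :=
        hvw.eventually_mem (hnb₁ w (η / 3) (by linarith))
      have e3 : ∀ᶠ n in atTop, (1 : ℝ) / (k (l n) + 1) < η / 3 :=
        hsmall.eventually (eventually_lt_nhds (show (0:ℝ) < η / 3 by linarith))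
      obtain ⟨n, h1, h2, h3⟩ := (e1.and (e2.and e3)).exists
      have t1 := htri₁ z (u (k (l n))) w
      have t2 := htri₁ (u (k (l n))) (v (k (l n))) w
      have hmid := hu (k (l n))
      have hvww : d₁ (v (k (l n))) w = d₁ w (v (k (l n))) := hsymm₁ _ _
      linarith
    have h0 : d₁ z w ≤ 0 := by
      by_contra hpos
      push_neg at hpos
      exact absurd (hd _ hpos) (lt_irrefl _)
    exact (heq₁ z w).1 (le_antisymm h0 (hnonneg₁ z w))
  subst hzw
  have e1 : ∀ᶠ n in atTop, d₂ z (u (k (l n))) < ε / 2 :=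
    huz.eventually_mem (hnb₂ z (ε / 2) (by linarith))
  have e2 : ∀ᶠ n in atTop, d₂ z (v (k (l n))) < ε / 2 :=
    hvw.eventually_mem (hnb₂ z (ε / 2) (by linarith))
  obtain ⟨n, h1, h2⟩ := (e1.and e2).exists
  have t1 := htri₂ (u (k (l n))) z (v (k (l n)))
  have hsu : d₂ (u (k (l n))) z = d₂ z (u (k (l n))) := hsymm₂ _ _
  have hεle := hv (k (l n))
  linarith

/-- If every `d₁`-small distance is `d₂`-small (uniformly), then the `d₁`-Morse
spectrum is contained in the `d₂`-Morse spectrum. -/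
lemma morseSpecD_subset (φ : Flow ℝ E) (a : ℝ → E → V) (d₁ d₂ : E → E → ℝ)
    (h : ∀ ε > (0:ℝ), ∃ δ > (0:ℝ), ∀ x y, d₁ x y < δ → d₂ x y < ε) (M : Set E) :
    morseSpecD φ a d₁ M ⊆ morseSpecD φ a d₂ M := by
  intro v hv
  simp only [morseSpecD, Set.mem_iInter] at hv ⊢
  intro ε hε T hT
  obtain ⟨δ, hδ, hδε⟩ := h ε hε
  refine closure_mono ?_ (hv δ hδ T hT)
  rintro w ⟨N, x, t, p, hp, q, hq, hc, hw⟩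
  exact ⟨N, x, t, p, hp, q, hq,
    ⟨hc.1, hc.2.1, hc.2.2.1, hc.2.2.2.1, fun i hi => hδε _ _ (hc.2.2.2.2 i hi)⟩, hw⟩

/-- The Morse spectrum of a chain component does not depend on the metric:
if `d'` is another metric on `E` inducing the same topology as the ambient
metric `dist`, then the Morse spectra computed with `d'`-chains and with
`dist`-chains coincide. -/
theorem morseSpec_metric_independent (φ : Flow ℝ E) (a : ℝ → E → V)
    (ha : IsAddCocycle φ a) (M : Set E) (hM : IsChainComponent φ M)
    (d' : E → E → ℝ)
    (hsymm : ∀ x y : E, d' x y = d' y x)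
    (heq : ∀ x y : E, d' x y = 0 ↔ x = y)
    (htri : ∀ x y z : E, d' x z ≤ d' x y + d' y z)
    (htop : ∀ (x : E) (U : Set E), U ∈ 𝓝 x ↔ ∃ ε > (0:ℝ), {y : E | d' x y < ε} ⊆ U) :
    morseSpecD φ a d' M = morseSpecD φ a dist M := by
  have hd'nb : ∀ (x : E) (η : ℝ), 0 < η → {y | d' x y < η} ∈ 𝓝 x := fun x η hη =>
    (htop x _).2 ⟨η, hη, subset_rfl⟩
  have hdistnb : ∀ (x : E) (η : ℝ), 0 < η → {y | dist x y < η} ∈ 𝓝 x := by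
    intro x η hη
    have : {y | dist x y < η} = Metric.ball x η := by
      ext y; simp [Metric.ball, dist_comm]
    rw [this]
    exact Metric.ball_mem_nhds x hη
  have h1 : ∀ ε > (0:ℝ), ∃ δ > (0:ℝ), ∀ x y : E, dist x y < δ → d' x y < ε :=
    unif_compare dist d' dist_comm (fun x y => dist_eq_zero) dist_triangle hdistnb
      hsymm htri hd'nb
  have h2 : ∀ ε > (0:ℝ), ∃ δ > (0:ℝ), ∀ x y : E, d' x y < δ → dist x y < ε :=
    unif_compare d' dist hsymm heq htri hd'nb dist_comm dist_triangle hdistnb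
  exact Set.Subset.antisymm (morseSpecD_subset φ a d' dist h2 M)
    (morseSpecD_subset φ a dist d' h1 M)

end
end

section
/- Let Π be a finite root system in the dual of a finite-dimensional real inner product space 𝔞, with simple system Σ, positive system Π⁺, open fundamental Weyl chamber 𝔞⁺ = {H ∈ 𝔞 : α(H) > 0 for all α ∈ Σ}, and Weyl group W. For Θ ⊆ Σ let W_Θ ⊆ W be the subgroup generated by the reflections s_α with α ∈ Θ. Then for any w₁, w₂ ∈ W the open cones int(w₁ · W_Θ · cl(𝔞⁺)) and int(w₂ · W_Θ · cl(𝔞⁺)) are either equal or disjoint; moreover they are equal if and only if the cosets w₁W_Θ and w₂W_Θ coincide. -/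
/-!
A closed chamber `g · cl 𝔞⁺` (`g ∈ W`) meets the dense set of regular points (where no root
vanishes) only inside `g · 𝔞⁺`. Hence if the interiors of `w₁ W_Θ cl 𝔞⁺` and `w₂ W_Θ cl 𝔞⁺`
meet, they share a regular point `w₁ u y = w₂ v z` with `u, v ∈ W_Θ` and `y, z ∈ 𝔞⁺`, and
simple transitivity of `W` on chambers gives `w₁ u = w₂ v`, i.e. `w₁ W_Θ = w₂ W_Θ`.

For simple transitivity, an element of `W` mapping a point of `𝔞⁺` into `𝔞⁺` preserves `Π⁺`.
It is a product of simple reflections (each `s_β` is one, by descent on `β H₀` for a fixed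
`H₀ ∈ 𝔞⁺`), and by the exchange condition a product of simple reflections preserving `Π⁺` can
be shortened until it is empty.
-/

open Filter Topology

section

variable {𝔞 : Type*} [NormedAddCommGroup 𝔞] [InnerProductSpace ℝ 𝔞] [FiniteDimensional ℝ 𝔞]

/-- The vector `u ∈ 𝔞` representing the functional `α` via the inner product:
`α x = ⟪u, x⟫` for all `x`. -/
noncomputable def rieszVec (α : 𝔞 →ₗ[ℝ] ℝ) : 𝔞 :=
  (InnerProductSpace.toDual ℝ 𝔞).symm (LinearMap.toContinuousLinearMap α)

/-- The orthogonal reflection of `𝔞` in the hyperplane `ker α`: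
`x ↦ x - (2 α x / α u) • u`, where `u` is the Riesz vector of `α`. -/
noncomputable def rootRefl (α : 𝔞 →ₗ[ℝ] ℝ) : Module.End ℝ 𝔞 :=
  LinearMap.id - (2 / α (rieszVec α)) • (α.smulRight (rieszVec α))

/-- `RS` bundles the data of a finite (possibly non-reduced) root system
`rts ⊆ 𝔞* \ {0}`, stable under the (duals of the) root reflections, together
with a positive system `pos` coming from a simple system `sim`. -/
structure IsRootSystemWithBase (rts pos : Set (𝔞 →ₗ[ℝ] ℝ)) (sim : Finset (𝔞 →ₗ[ℝ] ℝ)) : Prop where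
  finite : rts.Finite
  ne_zero : (0 : 𝔞 →ₗ[ℝ] ℝ) ∉ rts
  refl_mem : ∀ α ∈ rts, ∀ β ∈ rts, β ∘ₗ (rootRefl α : 𝔞 →ₗ[ℝ] 𝔞) ∈ rts
  sim_subset : ↑sim ⊆ pos
  pos_subset : pos ⊆ rts
  union : rts = pos ∪ (fun β => -β) '' pos
  disjoint : Disjoint pos ((fun β => -β) '' pos)
  pos_comb : ∀ β ∈ pos, ∃ c : (𝔞 →ₗ[ℝ] ℝ) → ℝ,
    (∀ α ∈ sim, 0 ≤ c α) ∧ β = ∑ α ∈ sim, c α • α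
  indep : LinearIndependent ℝ (fun α : sim => (α : 𝔞 →ₗ[ℝ] ℝ))

/-- The open fundamental Weyl chamber determined by the simple system `sim`. -/
def weylChamber (sim : Finset (𝔞 →ₗ[ℝ] ℝ)) : Set 𝔞 :=
  {H : 𝔞 | ∀ α ∈ sim, 0 < α H}

/-- `⟨Θ⟩ = Π ∩ span ℝ Θ`, the roots lying in the span of `Θ`. -/
def rootsSpannedBy (rts : Set (𝔞 →ₗ[ℝ] ℝ)) (Θ : Finset (𝔞 →ₗ[ℝ] ℝ)) : Set (𝔞 →ₗ[ℝ] ℝ) :=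
  rts ∩ (Submodule.span ℝ (↑Θ : Set (𝔞 →ₗ[ℝ] ℝ)) : Set (𝔞 →ₗ[ℝ] ℝ))

/-- The subgroup `W_Θ` of the Weyl group generated by the reflections `s_α`,
`α ∈ Θ` (as a submonoid of `End 𝔞`; since the reflections are involutions this
has the same elements as the generated group). -/
noncomputable def weylSubmonoid (Θ : Set (𝔞 →ₗ[ℝ] ℝ)) : Submonoid (Module.End ℝ 𝔞) :=
  Submonoid.closure (rootRefl '' Θ)

open RealInnerProductSpace

lemma inner_rieszVec_left (α : 𝔞 →ₗ[ℝ] ℝ) (x : 𝔞) : ⟪rieszVec α, x⟫ = α x := by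
  simp [rieszVec, InnerProductSpace.toDual_symm_apply]

lemma apply_rieszVec_self_pos {α : 𝔞 →ₗ[ℝ] ℝ} (hα : α ≠ 0) : 0 < α (rieszVec α) := by
  rw [← inner_rieszVec_left, real_inner_self_pos]
  intro h
  exact hα (LinearMap.ext fun x => by rw [← inner_rieszVec_left, h, inner_zero_left]; rfl)

lemma rootRefl_apply (α : 𝔞 →ₗ[ℝ] ℝ) (x : 𝔞) :
    rootRefl α x = x - (2 / α (rieszVec α) * α x) • rieszVec α := by
  simp [rootRefl, smul_smul]

lemma rootRefl_zero : rootRefl (0 : 𝔞 →ₗ[ℝ] ℝ) = 1 := by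
  ext x
  simp [rootRefl_apply]

lemma apply_rootRefl_self (α : 𝔞 →ₗ[ℝ] ℝ) (x : 𝔞) : α (rootRefl α x) = -α x := by
  rcases eq_or_ne α 0 with rfl | hα
  · simp [rootRefl_zero]
  have := (apply_rieszVec_self_pos hα).ne'
  rw [rootRefl_apply, map_sub, map_smul, smul_eq_mul]
  field_simp
  ring

lemma comp_rootRefl_self (α : 𝔞 →ₗ[ℝ] ℝ) : α ∘ₗ rootRefl α = -α :=
  LinearMap.ext (apply_rootRefl_self α)

lemma rootRefl_mul_self (α : 𝔞 →ₗ[ℝ] ℝ) : rootRefl α * rootRefl α = 1 := by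
  ext x
  rw [Module.End.mul_apply, rootRefl_apply α (rootRefl α x), apply_rootRefl_self,
    rootRefl_apply α x, Module.End.one_apply]
  module

lemma inner_rootRefl_rootRefl (α : 𝔞 →ₗ[ℝ] ℝ) (x y : 𝔞) :
    ⟪rootRefl α x, rootRefl α y⟫ = ⟪x, y⟫ := by
  rcases eq_or_ne α 0 with rfl | hα
  · simp [rootRefl_zero]
  have : ⟪rieszVec α, rieszVec α⟫ ≠ 0 := by
    rw [inner_rieszVec_left]
    exact (apply_rieszVec_self_pos hα).ne'
  simp only [rootRefl_apply, inner_sub_left, inner_sub_right, real_inner_smul_left,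
    real_inner_smul_right, ← inner_rieszVec_left α, real_inner_comm x (rieszVec α)]
  field_simp
  ring

lemma rieszVec_comp {p q : Module.End ℝ 𝔞} (hpq : p * q = 1)
    (hp : ∀ x y, ⟪p x, p y⟫ = ⟪x, y⟫) (β : 𝔞 →ₗ[ℝ] ℝ) :
    rieszVec (β ∘ₗ p) = q (rieszVec β) := by
  refine ext_inner_right ℝ fun x => ?_
  rw [inner_rieszVec_left, ← hp, ← Module.End.mul_apply p q, hpq, Module.End.one_apply,
    inner_rieszVec_left, LinearMap.comp_apply]

lemma rootRefl_comp {p q : Module.End ℝ 𝔞} (hpq : p * q = 1) (hqp : q * p = 1)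
    (hp : ∀ x y, ⟪p x, p y⟫ = ⟪x, y⟫) (β : 𝔞 →ₗ[ℝ] ℝ) :
    rootRefl (β ∘ₗ p) = q * rootRefl β * p := by
  have hpq' : p (q (rieszVec β)) = rieszVec β := by
    rw [← Module.End.mul_apply, hpq, Module.End.one_apply]
  ext x
  have hqp' : q (p x) = x := by rw [← Module.End.mul_apply, hqp, Module.End.one_apply]
  simp only [Module.End.mul_apply, rootRefl_apply, rieszVec_comp hpq hp, LinearMap.comp_apply,
    hpq', map_sub, map_smul, hqp']

lemma rootRefl_comp_rootRefl (β α : 𝔞 →ₗ[ℝ] ℝ) :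
    rootRefl (β ∘ₗ rootRefl α) = rootRefl α * rootRefl β * rootRefl α :=
  rootRefl_comp (rootRefl_mul_self α) (rootRefl_mul_self α) (inner_rootRefl_rootRefl α) β

lemma rootRefl_smul {c : ℝ} (hc : c ≠ 0) (α : 𝔞 →ₗ[ℝ] ℝ) : rootRefl (c • α) = rootRefl α := by
  rcases eq_or_ne α 0 with rfl | hα
  · simp [rootRefl_zero]
  have := (apply_rieszVec_self_pos hα).ne'
  have hriesz : rieszVec (c • α) = c • rieszVec α := by simp [rieszVec]
  ext x
  rw [rootRefl_apply, rootRefl_apply, hriesz, smul_smul]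
  congr 2
  simp only [LinearMap.smul_apply, map_smul, smul_eq_mul]
  field_simp

lemma rootRefl_neg (α : 𝔞 →ₗ[ℝ] ℝ) : rootRefl (-α) = rootRefl α := by
  rw [← neg_one_smul ℝ α, rootRefl_smul (by norm_num)]

lemma comp_rootRefl (β α : 𝔞 →ₗ[ℝ] ℝ) :
    β ∘ₗ rootRefl α = β - (2 * β (rieszVec α) / α (rieszVec α)) • α := by
  ext x
  simp only [LinearMap.comp_apply, rootRefl_apply, map_sub, map_smul, smul_eq_mul,
    LinearMap.sub_apply, LinearMap.smul_apply]
  ring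

lemma rootRefl_mem_weylSubmonoid {S : Set (𝔞 →ₗ[ℝ] ℝ)} {α : 𝔞 →ₗ[ℝ] ℝ} (hα : α ∈ S) :
    rootRefl α ∈ weylSubmonoid S :=
  Submonoid.subset_closure ⟨α, hα, rfl⟩

lemma weylSubmonoid_mono {S T : Set (𝔞 →ₗ[ℝ] ℝ)} (h : S ⊆ T) :
    weylSubmonoid S ≤ weylSubmonoid T :=
  Submonoid.closure_mono (Set.image_mono h)

lemma exists_inv_mem_weylSubmonoid {S : Set (𝔞 →ₗ[ℝ] ℝ)} {w : Module.End ℝ 𝔞}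
    (hw : w ∈ weylSubmonoid S) : ∃ w' ∈ weylSubmonoid S, w * w' = 1 ∧ w' * w = 1 := by
  induction hw using Submonoid.closure_induction with
  | mem x hx =>
    obtain ⟨α, hα, rfl⟩ := hx
    exact ⟨rootRefl α, rootRefl_mem_weylSubmonoid hα, rootRefl_mul_self α, rootRefl_mul_self α⟩
  | one => exact ⟨1, one_mem _, one_mul 1, one_mul 1⟩
  | mul a b _ _ iha ihb =>
    obtain ⟨a', ha', haa', ha'a⟩ := iha
    obtain ⟨b', hb', hbb', hb'b⟩ := ihb
    refine ⟨b' * a', mul_mem hb' ha', ?_, ?_⟩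
    · rw [mul_assoc, ← mul_assoc b, hbb', one_mul, haa']
    · rw [mul_assoc, ← mul_assoc a', ha'a, one_mul, hb'b]

lemma image_mul_left_weylSubmonoid_eq_iff {Θ : Set (𝔞 →ₗ[ℝ] ℝ)} {w₁ w₂ : Module.End ℝ 𝔞} :
    (fun u => w₁ * u) '' (weylSubmonoid Θ : Set (Module.End ℝ 𝔞))
        = (fun u => w₂ * u) '' (weylSubmonoid Θ : Set (Module.End ℝ 𝔞)) ↔
      ∃ m ∈ weylSubmonoid Θ, w₁ * m = w₂ := by
  constructor
  · intro h
    have hw₂ : w₂ ∈ (fun u => w₂ * u) '' (weylSubmonoid Θ : Set (Module.End ℝ 𝔞)) :=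
      ⟨1, one_mem _, mul_one w₂⟩
    rw [← h] at hw₂
    exact hw₂
  · rintro ⟨m, hm, rfl⟩
    obtain ⟨m', hm', hmm', -⟩ := exists_inv_mem_weylSubmonoid hm
    ext x
    constructor
    · rintro ⟨p, hp, rfl⟩
      refine ⟨m' * p, mul_mem hm' hp, ?_⟩
      simp only [← mul_assoc]
      rw [mul_assoc w₁ m m', hmm', mul_one]
    · rintro ⟨p, hp, rfl⟩
      exact ⟨m * p, mul_mem hm hp, (mul_assoc _ _ _).symm⟩

def weylCone (Θ : Set (𝔞 →ₗ[ℝ] ℝ)) (sim : Finset (𝔞 →ₗ[ℝ] ℝ)) : Set 𝔞 :=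
  ⋃ u ∈ weylSubmonoid Θ, ⇑u '' closure (weylChamber sim)

lemma image_weylCone {Θ : Set (𝔞 →ₗ[ℝ] ℝ)} {u : Module.End ℝ 𝔞} (hu : u ∈ weylSubmonoid Θ)
    (sim : Finset (𝔞 →ₗ[ℝ] ℝ)) : ⇑u '' weylCone Θ sim = weylCone Θ sim := by
  have image_subset : ∀ u ∈ weylSubmonoid Θ, ⇑u '' weylCone Θ sim ⊆ weylCone Θ sim := by
    rintro u hu _ ⟨_, hx, rfl⟩
    obtain ⟨v, hv, y, hy, rfl⟩ := Set.mem_iUnion₂.mp hx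
    exact Set.mem_iUnion₂.mpr ⟨u * v, mul_mem hu hv, y, hy, rfl⟩
  obtain ⟨u', hu', huu', -⟩ := exists_inv_mem_weylSubmonoid hu
  refine (image_subset u hu).antisymm fun x hx => ⟨u' x, image_subset u' hu' ⟨x, hx, rfl⟩, ?_⟩
  rw [← Module.End.mul_apply, huu', Module.End.one_apply]

lemma isOpen_weylChamber (sim : Finset (𝔞 →ₗ[ℝ] ℝ)) : IsOpen (weylChamber sim) := by
  simp only [weylChamber, Set.ofPred_forall]
  exact isOpen_biInter_finset fun α _ =>
    isOpen_lt continuous_const α.continuous_of_finiteDimensional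

lemma dense_setOf_apply_ne_zero {M : Type*} [AddCommGroup M] [Module ℝ M] [TopologicalSpace M]
    [ContinuousAdd M] [ContinuousSMul ℝ M] {α : M →ₗ[ℝ] ℝ} (hα : α ≠ 0) :
    Dense {x : M | α x ≠ 0} := by
  have hker : {x : M | α x ≠ 0} = (LinearMap.ker α : Set M)ᶜ := rfl
  rw [hker, ← interior_eq_empty_iff_dense_compl, ← Set.not_nonempty_iff_eq_empty]
  exact fun h => hα (LinearMap.ker_eq_top.mp (Submodule.eq_top_of_nonempty_interior' _ h))

namespace IsRootSystemWithBase

variable {rts pos : Set (𝔞 →ₗ[ℝ] ℝ)} {sim : Finset (𝔞 →ₗ[ℝ] ℝ)}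

lemma ne_zero_of_mem (hRS : IsRootSystemWithBase rts pos sim) {β : 𝔞 →ₗ[ℝ] ℝ} (hβ : β ∈ rts) :
    β ≠ 0 :=
  fun h => hRS.ne_zero (h ▸ hβ)

lemma mem_pos_or_neg_mem_pos (hRS : IsRootSystemWithBase rts pos sim) {β : 𝔞 →ₗ[ℝ] ℝ}
    (hβ : β ∈ rts) : β ∈ pos ∨ -β ∈ pos := by
  rcases hRS.union ▸ hβ with h | ⟨δ, hδ, rfl⟩
  · exact Or.inl h
  · exact Or.inr (by rwa [neg_neg])

lemma neg_notMem_pos (hRS : IsRootSystemWithBase rts pos sim) {β : 𝔞 →ₗ[ℝ] ℝ}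
    (hβ : β ∈ pos) : -β ∉ pos :=
  fun h => Set.disjoint_left.mp hRS.disjoint h ⟨β, hβ, rfl⟩

lemma linearIndepOn_sim (hRS : IsRootSystemWithBase rts pos sim) :
    LinearIndepOn ℝ id (sim : Set (𝔞 →ₗ[ℝ] ℝ)) :=
  hRS.indep

lemma apply_pos_of_mem_pos (hRS : IsRootSystemWithBase rts pos sim) {H : 𝔞}
    (hH : H ∈ weylChamber sim) {β : 𝔞 →ₗ[ℝ] ℝ} (hβ : β ∈ pos) : 0 < β H := by
  have hβ0 := hRS.ne_zero_of_mem (hRS.pos_subset hβ)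
  obtain ⟨c, hc, rfl⟩ := hRS.pos_comb β hβ
  obtain ⟨γ, hγ, hcγ⟩ := Finset.exists_ne_zero_of_sum_ne_zero hβ0
  simp only [LinearMap.sum_apply, LinearMap.smul_apply, smul_eq_mul]
  refine Finset.sum_pos' (fun γ hγ => mul_nonneg (hc γ hγ) (hH γ hγ).le) ⟨γ, hγ, ?_⟩
  exact mul_pos ((hc γ hγ).lt_of_ne' (left_ne_zero_of_smul hcγ)) (hH γ hγ)

lemma mem_pos_iff (hRS : IsRootSystemWithBase rts pos sim) {H : 𝔞} (hH : H ∈ weylChamber sim)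
    {β : 𝔞 →ₗ[ℝ] ℝ} (hβ : β ∈ rts) : β ∈ pos ↔ 0 < β H := by
  refine ⟨hRS.apply_pos_of_mem_pos hH, fun h => ?_⟩
  refine (hRS.mem_pos_or_neg_mem_pos hβ).resolve_right fun hneg => ?_
  have := hRS.apply_pos_of_mem_pos hH hneg
  rw [LinearMap.neg_apply] at this
  linarith

lemma comp_mem (hRS : IsRootSystemWithBase rts pos sim) {w : Module.End ℝ 𝔞}
    (hw : w ∈ weylSubmonoid rts) {β : 𝔞 →ₗ[ℝ] ℝ} (hβ : β ∈ rts) : β ∘ₗ w ∈ rts := by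
  induction hw using Submonoid.closure_induction generalizing β with
  | mem s hs =>
    obtain ⟨α, hα, rfl⟩ := hs
    exact hRS.refl_mem α hα β hβ
  | one => exact hβ
  | mul a b _ _ iha ihb => exact ihb (iha hβ)

lemma weylChamber_nonempty (hRS : IsRootSystemWithBase rts pos sim) :
    (weylChamber sim).Nonempty := by
  obtain ⟨f, hf⟩ := Module.exists_dual_forall_apply_eq_one hRS.linearIndepOn_sim
  refine ⟨(Module.evalEquiv ℝ 𝔞).symm f, fun α hα => ?_⟩
  have hfα : f α = 1 := hf α hα
  simp [hfα]

lemma exists_eq_smul_of_add_eq_smul (hRS : IsRootSystemWithBase rts pos sim)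
    {α β δ : 𝔞 →ₗ[ℝ] ℝ} (hα : α ∈ sim) (hβ : β ∈ pos) (hδ : δ ∈ pos) {t : ℝ}
    (h : β + δ = t • α) : ∃ b : ℝ, β = b • α := by
  classical
  obtain ⟨b, hb, rfl⟩ := hRS.pos_comb β hβ
  obtain ⟨d, hd, rfl⟩ := hRS.pos_comb δ hδ
  have hcoeff := linearIndepOn_finset_iff.mp hRS.linearIndepOn_sim
    (fun γ => b γ + d γ - if γ = α then t else 0) (by
      simp only [sub_smul, add_smul, ite_smul, zero_smul, Finset.sum_sub_distrib,
        Finset.sum_add_distrib, Finset.sum_ite_eq', if_pos hα, id, h, sub_self])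
  refine ⟨b α, Finset.sum_eq_single_of_mem α hα fun γ hγ hγα => ?_⟩
  have := hcoeff γ hγ
  rw [if_neg hγα] at this
  rw [show b γ = 0 by linarith [hb γ hγ, hd γ hγ], zero_smul]

lemma rootRefl_eq_of_neg_comp_mem_pos (hRS : IsRootSystemWithBase rts pos sim)
    {α β : 𝔞 →ₗ[ℝ] ℝ} (hα : α ∈ sim) (hβ : β ∈ pos) (h : -(β ∘ₗ rootRefl α) ∈ pos) :
    rootRefl β = rootRefl α := by
  obtain ⟨b, rfl⟩ := hRS.exists_eq_smul_of_add_eq_smul hα hβ h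
    (t := 2 * β (rieszVec α) / α (rieszVec α)) (by rw [comp_rootRefl]; abel)
  have hb : b ≠ 0 := by
    rintro rfl
    exact hRS.ne_zero_of_mem (hRS.pos_subset hβ) (zero_smul _ _)
  exact rootRefl_smul hb α

lemma exchange (hRS : IsRootSystemWithBase rts pos sim) (t : List (Module.End ℝ 𝔞))
    (ht : ∀ s ∈ t, s ∈ rootRefl '' (sim : Set (𝔞 →ₗ[ℝ] ℝ))) {β : 𝔞 →ₗ[ℝ] ℝ} (hβ : β ∈ pos)
    (hneg : -(β ∘ₗ t.prod) ∈ pos) :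
    ∃ t' : List (Module.End ℝ 𝔞), (∀ s ∈ t', s ∈ rootRefl '' (sim : Set (𝔞 →ₗ[ℝ] ℝ))) ∧
      t'.length + 1 = t.length ∧ t.prod = rootRefl β * t'.prod := by
  induction t generalizing β with
  | nil => exact absurd hneg (hRS.neg_notMem_pos hβ)
  | cons s t ih =>
    obtain ⟨γ, hγ, rfl⟩ := ht s List.mem_cons_self
    have ht' : ∀ s ∈ t, s ∈ rootRefl '' (sim : Set (𝔞 →ₗ[ℝ] ℝ)) :=
      fun s hs => ht s (List.mem_cons_of_mem _ hs)
    rcases hRS.mem_pos_or_neg_mem_pos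
        (hRS.refl_mem γ (hRS.pos_subset (hRS.sim_subset hγ)) β (hRS.pos_subset hβ)) with
      hpos | hneg'
    · obtain ⟨t', ht'', hlen, hprod⟩ := ih ht' hpos hneg
      refine ⟨rootRefl γ :: t', List.forall_mem_cons.mpr ⟨⟨γ, hγ, rfl⟩, ht''⟩,
        by simp [← hlen], ?_⟩
      rw [List.prod_cons, List.prod_cons, hprod, rootRefl_comp_rootRefl]
      simp only [← mul_assoc, rootRefl_mul_self, one_mul]
    · exact ⟨t, ht', rfl, by rw [List.prod_cons, hRS.rootRefl_eq_of_neg_comp_mem_pos hγ hβ hneg']⟩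

lemma prod_eq_one_of_comp_mem_pos (hRS : IsRootSystemWithBase rts pos sim)
    (t : List (Module.End ℝ 𝔞)) (ht : ∀ s ∈ t, s ∈ rootRefl '' (sim : Set (𝔞 →ₗ[ℝ] ℝ)))
    (hpos : ∀ β ∈ pos, β ∘ₗ t.prod ∈ pos) : t.prod = 1 := by
  generalize hn : t.length = n
  induction n using Nat.strong_induction_on generalizing t with
  | _ n ih =>
    rcases t with _ | ⟨s, t₂⟩
    · rfl
    obtain ⟨α, hα, rfl⟩ := ht s List.mem_cons_self
    have hα' := hRS.sim_subset hα
    have hneg : -(α ∘ₗ t₂.prod) ∈ pos := by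
      simpa only [List.prod_cons, Module.End.mul_eq_comp, ← LinearMap.comp_assoc,
        comp_rootRefl_self, LinearMap.neg_comp] using hpos α hα'
    obtain ⟨t', ht', hlen, hprod⟩ :=
      hRS.exchange t₂ (fun s hs => ht s (List.mem_cons_of_mem _ hs)) hα' hneg
    have hfold : (rootRefl α :: t₂).prod = t'.prod := by
      rw [List.prod_cons, hprod, ← mul_assoc, rootRefl_mul_self, one_mul]
    rw [hfold] at hpos ⊢
    exact ih t'.length (by simp only [List.length_cons] at hn; omega) t' ht' hpos rfl

lemma exists_mem_sim_apply_pos (hRS : IsRootSystemWithBase rts pos sim) {β : 𝔞 →ₗ[ℝ] ℝ}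
    (hβ : β ∈ pos) {x : 𝔞} (hx : 0 < β x) : ∃ α ∈ sim, 0 < α x := by
  obtain ⟨c, hc, rfl⟩ := hRS.pos_comb β hβ
  simp only [LinearMap.sum_apply, LinearMap.smul_apply, smul_eq_mul] at hx
  obtain ⟨α, hα, h⟩ := Finset.exists_lt_of_sum_lt
    (by rwa [Finset.sum_const_zero] : ∑ _ ∈ sim, (0 : ℝ) < ∑ γ ∈ sim, c γ * γ x)
  exact ⟨α, hα, pos_of_mul_pos_right h (hc α hα)⟩

lemma rootRefl_mem_weylSubmonoid_sim (hRS : IsRootSystemWithBase rts pos sim)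
    {β : 𝔞 →ₗ[ℝ] ℝ} (hβ : β ∈ pos) : rootRefl β ∈ weylSubmonoid (sim : Set (𝔞 →ₗ[ℝ] ℝ)) := by
  obtain ⟨H₀, hH₀⟩ := hRS.weylChamber_nonempty
  by_contra hβW
  obtain ⟨β, ⟨hβ, hβW⟩, hmin⟩ :=
    Set.exists_min_image {β | β ∈ pos ∧ rootRefl β ∉ weylSubmonoid (sim : Set (𝔞 →ₗ[ℝ] ℝ))}
      (fun β => β H₀) (hRS.finite.subset fun β h => hRS.pos_subset h.1) ⟨β, hβ, hβW⟩
  have hβ0 := hRS.ne_zero_of_mem (hRS.pos_subset hβ)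
  obtain ⟨α, hα, hαβ⟩ := hRS.exists_mem_sim_apply_pos hβ (apply_rieszVec_self_pos hβ0)
  have hsα := rootRefl_mem_weylSubmonoid (S := (sim : Set (𝔞 →ₗ[ℝ] ℝ))) hα
  have hα0 := hRS.ne_zero_of_mem (hRS.pos_subset (hRS.sim_subset hα))
  rcases hRS.mem_pos_or_neg_mem_pos (hRS.refl_mem α (hRS.pos_subset (hRS.sim_subset hα)) β
      (hRS.pos_subset hβ)) with hpos | hneg
  · have hlt : (β ∘ₗ rootRefl α) H₀ < β H₀ := by
      have hβα : 0 < β (rieszVec α) := by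
        rwa [← inner_rieszVec_left β, real_inner_comm, inner_rieszVec_left]
      have := apply_rieszVec_self_pos hα0
      have := hH₀ α hα
      rw [comp_rootRefl, LinearMap.sub_apply, LinearMap.smul_apply, smul_eq_mul, sub_lt_self_iff]
      positivity
    have hmem : rootRefl (β ∘ₗ rootRefl α) ∈ weylSubmonoid (sim : Set (𝔞 →ₗ[ℝ] ℝ)) :=
      by_contra fun h => (hmin _ ⟨hpos, h⟩).not_gt hlt
    apply hβW
    have hconj : rootRefl β = rootRefl α * rootRefl (β ∘ₗ rootRefl α) * rootRefl α := by
      rw [rootRefl_comp_rootRefl, ← mul_assoc, ← mul_assoc, rootRefl_mul_self, one_mul,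
        mul_assoc, rootRefl_mul_self, mul_one]
    rw [hconj]
    exact mul_mem (mul_mem hsα hmem) hsα
  · exact hβW (hRS.rootRefl_eq_of_neg_comp_mem_pos hα hβ hneg ▸ hsα)

lemma weylSubmonoid_le_sim (hRS : IsRootSystemWithBase rts pos sim) :
    weylSubmonoid rts ≤ weylSubmonoid (sim : Set (𝔞 →ₗ[ℝ] ℝ)) := by
  refine Submonoid.closure_le.mpr ?_
  rintro _ ⟨β, hβ, rfl⟩
  rcases hRS.mem_pos_or_neg_mem_pos hβ with h | h
  · exact hRS.rootRefl_mem_weylSubmonoid_sim h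
  · rw [← rootRefl_neg]
    exact hRS.rootRefl_mem_weylSubmonoid_sim h

lemma eq_one_of_apply_mem_weylChamber (hRS : IsRootSystemWithBase rts pos sim)
    {k : Module.End ℝ 𝔞} (hk : k ∈ weylSubmonoid rts) {y : 𝔞} (hy : y ∈ weylChamber sim)
    (hky : k y ∈ weylChamber sim) : k = 1 := by
  obtain ⟨t, ht, rfl⟩ := Submonoid.exists_list_of_mem_closure (hRS.weylSubmonoid_le_sim hk)
  refine hRS.prod_eq_one_of_comp_mem_pos t ht fun β hβ => ?_
  exact (hRS.mem_pos_iff hy (hRS.comp_mem hk (hRS.pos_subset hβ))).mpr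
    (hRS.apply_pos_of_mem_pos hky hβ)

lemma eq_of_apply_eq (hRS : IsRootSystemWithBase rts pos sim) {g h : Module.End ℝ 𝔞}
    (hg : g ∈ weylSubmonoid rts) (hh : h ∈ weylSubmonoid rts) {y z : 𝔞}
    (hy : y ∈ weylChamber sim) (hz : z ∈ weylChamber sim) (hyz : g y = h z) : g = h := by
  obtain ⟨h', hh', hhh', hh'h⟩ := exists_inv_mem_weylSubmonoid hh
  have hk : h' * g = 1 := by
    refine hRS.eq_one_of_apply_mem_weylChamber (mul_mem hh' hg) hy ?_
    rwa [Module.End.mul_apply, hyz, ← Module.End.mul_apply, hh'h, Module.End.one_apply]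
  calc g = h * h' * g := by rw [hhh', one_mul]
    _ = h := by rw [mul_assoc, hk, mul_one]

lemma mem_weylChamber_of_mem_closure (hRS : IsRootSystemWithBase rts pos sim) {H : 𝔞}
    (hH : H ∈ closure (weylChamber sim)) (hreg : ∀ α ∈ rts, α H ≠ 0) :
    H ∈ weylChamber sim := by
  intro α hα
  have hclosure : closure (weylChamber sim) ⊆ {K | 0 ≤ α K} :=
    closure_minimal (fun K hK => (hK α hα).le)
      (isClosed_le continuous_const α.continuous_of_finiteDimensional)
  exact (hclosure hH).lt_of_ne' (hreg α (hRS.pos_subset (hRS.sim_subset hα)))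

lemma dense_setOf_forall_apply_ne_zero (hRS : IsRootSystemWithBase rts pos sim) :
    Dense {H : 𝔞 | ∀ α ∈ rts, α H ≠ 0} := by
  have := dense_biInter_of_isOpen (S := rts) (f := fun α => {H : 𝔞 | α H ≠ 0})
    (fun α _ => isOpen_ne_fun α.continuous_of_finiteDimensional continuous_const)
    hRS.finite.countable (fun α hα => dense_setOf_apply_ne_zero (hRS.ne_zero_of_mem hα))
  simpa only [Set.ofPred_forall] using this

lemma forall_apply_map_ne_zero (hRS : IsRootSystemWithBase rts pos sim) {w : Module.End ℝ 𝔞}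
    (hw : w ∈ weylSubmonoid rts) {H : 𝔞} (hH : ∀ α ∈ rts, α H ≠ 0) :
    ∀ α ∈ rts, α (w H) ≠ 0 :=
  fun _ hα => hH _ (hRS.comp_mem hw hα)

lemma interior_image_weylCone_nonempty (hRS : IsRootSystemWithBase rts pos sim)
    {w : Module.End ℝ 𝔞} (hw : w ∈ weylSubmonoid rts) (Θ : Set (𝔞 →ₗ[ℝ] ℝ)) :
    (interior (⇑w '' weylCone Θ sim)).Nonempty := by
  obtain ⟨H, hH⟩ := hRS.weylChamber_nonempty
  obtain ⟨w', -, hww', -⟩ := exists_inv_mem_weylSubmonoid hw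
  have hsurj : Function.Surjective w := fun x =>
    ⟨w' x, by rw [← Module.End.mul_apply, hww', Module.End.one_apply]⟩
  have hopen : IsOpen (⇑w '' weylChamber sim) :=
    LinearMap.isOpenMap_of_finiteDimensional _ hsurj _ (isOpen_weylChamber sim)
  refine ⟨w H, interior_maximal (Set.image_mono fun x hx => ?_) hopen ⟨H, hH, rfl⟩⟩
  exact Set.mem_iUnion₂.mpr ⟨1, one_mem _, x, subset_closure hx, rfl⟩

lemma exists_apply_eq_of_mem_image_weylCone (hRS : IsRootSystemWithBase rts pos sim)
    {Θ : Set (𝔞 →ₗ[ℝ] ℝ)} (hΘ : Θ ⊆ rts) {w : Module.End ℝ 𝔞} (hw : w ∈ weylSubmonoid rts)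
    {H : 𝔞} (hH : H ∈ ⇑w '' weylCone Θ sim) (hreg : ∀ α ∈ rts, α H ≠ 0) :
    ∃ u ∈ weylSubmonoid Θ, ∃ y ∈ weylChamber sim, (w * u) y = H := by
  obtain ⟨_, hx, rfl⟩ := hH
  obtain ⟨u, hu, y, hy, rfl⟩ := Set.mem_iUnion₂.mp hx
  obtain ⟨g', hg', -, hg'g⟩ :=
    exists_inv_mem_weylSubmonoid (mul_mem hw (weylSubmonoid_mono hΘ hu))
  refine ⟨u, hu, y, hRS.mem_weylChamber_of_mem_closure hy ?_, rfl⟩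
  have hy' : y = g' ((w * u) y) := by rw [← Module.End.mul_apply, hg'g, Module.End.one_apply]
  rw [hy']
  exact hRS.forall_apply_map_ne_zero hg' hreg

lemma exists_mul_eq_of_interior_inter_nonempty (hRS : IsRootSystemWithBase rts pos sim)
    {Θ : Set (𝔞 →ₗ[ℝ] ℝ)} (hΘ : Θ ⊆ rts) {w₁ w₂ : Module.End ℝ 𝔞}
    (hw₁ : w₁ ∈ weylSubmonoid rts) (hw₂ : w₂ ∈ weylSubmonoid rts)
    (h : (interior (⇑w₁ '' weylCone Θ sim) ∩ interior (⇑w₂ '' weylCone Θ sim)).Nonempty) :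
    ∃ m ∈ weylSubmonoid Θ, w₁ * m = w₂ := by
  obtain ⟨H, ⟨hH₁, hH₂⟩, hreg⟩ :=
    hRS.dense_setOf_forall_apply_ne_zero.inter_open_nonempty _
      (isOpen_interior.inter isOpen_interior) h
  obtain ⟨u, hu, y, hy, rfl⟩ :=
    hRS.exists_apply_eq_of_mem_image_weylCone hΘ hw₁ (interior_subset hH₁) hreg
  obtain ⟨v, hv, z, hz, hzy⟩ :=
    hRS.exists_apply_eq_of_mem_image_weylCone hΘ hw₂ (interior_subset hH₂) hreg
  have hvu : w₂ * v = w₁ * u := hRS.eq_of_apply_eq (mul_mem hw₂ (weylSubmonoid_mono hΘ hv))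
    (mul_mem hw₁ (weylSubmonoid_mono hΘ hu)) hz hy hzy
  obtain ⟨v', hv', hvv', -⟩ := exists_inv_mem_weylSubmonoid hv
  refine ⟨u * v', mul_mem hu hv', ?_⟩
  rw [← mul_assoc, ← hvu, mul_assoc, hvv', mul_one]

end IsRootSystemWithBase

/-- For `w₁, w₂` in the Weyl group, the open cones `int (wᵢ · W_Θ · cl 𝔞⁺)` are
either equal or disjoint, and they are equal iff the cosets `wᵢ W_Θ` coincide. -/
theorem interior_cones_eq_or_disjoint (rts pos : Set (𝔞 →ₗ[ℝ] ℝ))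
    (sim Θ : Finset (𝔞 →ₗ[ℝ] ℝ))
    (hRS : IsRootSystemWithBase rts pos sim) (hΘ : Θ ⊆ sim)
    (w₁ w₂ : Module.End ℝ 𝔞)
    (hw₁ : w₁ ∈ weylSubmonoid rts) (hw₂ : w₂ ∈ weylSubmonoid rts) :
    (interior (⇑w₁ '' ⋃ u ∈ weylSubmonoid (↑Θ : Set (𝔞 →ₗ[ℝ] ℝ)),
          ⇑u '' closure (weylChamber sim))
        = interior (⇑w₂ '' ⋃ u ∈ weylSubmonoid (↑Θ : Set (𝔞 →ₗ[ℝ] ℝ)),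
          ⇑u '' closure (weylChamber sim)) ∨
      Disjoint
        (interior (⇑w₁ '' ⋃ u ∈ weylSubmonoid (↑Θ : Set (𝔞 →ₗ[ℝ] ℝ)),
          ⇑u '' closure (weylChamber sim)))
        (interior (⇑w₂ '' ⋃ u ∈ weylSubmonoid (↑Θ : Set (𝔞 →ₗ[ℝ] ℝ)),
          ⇑u '' closure (weylChamber sim)))) ∧
    (interior (⇑w₁ '' ⋃ u ∈ weylSubmonoid (↑Θ : Set (𝔞 →ₗ[ℝ] ℝ)),
          ⇑u '' closure (weylChamber sim))
        = interior (⇑w₂ '' ⋃ u ∈ weylSubmonoid (↑Θ : Set (𝔞 →ₗ[ℝ] ℝ)),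
          ⇑u '' closure (weylChamber sim))
      ↔ (fun u => w₁ * u) '' (weylSubmonoid (↑Θ : Set (𝔞 →ₗ[ℝ] ℝ)) : Set (Module.End ℝ 𝔞))
          = (fun u => w₂ * u) '' (weylSubmonoid (↑Θ : Set (𝔞 →ₗ[ℝ] ℝ)) : Set (Module.End ℝ 𝔞))) := by
  have hΘrts : (Θ : Set (𝔞 →ₗ[ℝ] ℝ)) ⊆ rts :=
    fun α hα => hRS.pos_subset (hRS.sim_subset (hΘ hα))
  have hcone : (∃ m ∈ weylSubmonoid (Θ : Set (𝔞 →ₗ[ℝ] ℝ)), w₁ * m = w₂) →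
      interior (⇑w₁ '' weylCone Θ sim) = interior (⇑w₂ '' weylCone Θ sim) := by
    rintro ⟨m, hm, rfl⟩
    rw [Module.End.coe_mul, Set.image_comp, image_weylCone hm]
  have hmeet := hRS.exists_mul_eq_of_interior_inter_nonempty hΘrts hw₁ hw₂
  rw [image_mul_left_weylSubmonoid_eq_iff]
  refine ⟨(Set.disjoint_or_nonempty_inter _ _).symm.imp_left (hcone ∘ hmeet),
    fun h => hmeet ?_, hcone⟩
  have h' : interior (⇑w₁ '' weylCone Θ sim) = interior (⇑w₂ '' weylCone Θ sim) := h
  rw [h', Set.inter_self]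
  exact hRS.interior_image_weylCone_nonempty hw₂ _

end
end
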